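/- arXiv:1612.06103 — 4 statements merged into one kernel-verified Lean document; each statement's English description precedes it below -/
import Mathlib

section
/- Let λ be a symplectic partition of 2n. Then λ_{2j−1} ≡ λ_{2j} (mod 2) for every j ≥ 1 (i.e. λ is special) if and only if the transpose ^tλ is a symplectic partition of 2n. -/
open Classical

namespace Wald

/-- `S f k = λ_1 + … + λ_k` (partitions are indexed from 1; index 0 is unused). -/
def S (f : ℕ → ℕ) (k : ℕ) : ℕ := ∑ j ∈ Finset.Icc 1 k, f j

/-- `f` represents a partition of `N`: nonincreasing on indices `≥ 1`,
finitely many nonzero terms, with total sum `N`. -/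
structure IsPartition (f : ℕ → ℕ) (N : ℕ) : Prop where
  mono : ∀ ⦃j k : ℕ⦄, 1 ≤ j → j ≤ k → f k ≤ f j
  fin : ∃ m, ∀ j, m < j → f j = 0
  total : ∀ m, (∀ j, m < j → f j = 0) → S f m = N

/-- multiplicity of `i` as a term of the partition -/
noncomputable def mult (f : ℕ → ℕ) (i : ℕ) : ℕ := Set.ncard {j : ℕ | 1 ≤ j ∧ f j = i}

/-- dominance order: `Dom f g ↔ f ≤ g` -/
def Dom (f g : ℕ → ℕ) : Prop := ∀ k, S f k ≤ S g k

/-- transposed partition: `(transpose f) j = #{i ≥ 1 : f i ≥ j}` for `j ≥ 1` -/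
noncomputable def transpose (f : ℕ → ℕ) : ℕ → ℕ :=
  fun j => Set.ncard {i : ℕ | 1 ≤ i ∧ 1 ≤ j ∧ j ≤ f i}

/-- union of two partitions (all terms listed together in nonincreasing order);
it is characterized by `transpose (unionP f g) = transpose f + transpose g`. -/
noncomputable def unionP (f g : ℕ → ℕ) : ℕ → ℕ :=
  transpose (fun j => transpose f j + transpose g j)

/-- the partition `(1)` -/
def one1 : ℕ → ℕ := fun j => if j = 1 then 1 else 0

/-- symplectic partition: every odd `i ≥ 1` has even multiplicity -/
def Symp (f : ℕ → ℕ) : Prop := ∀ i, Odd i → Even (mult f i)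

/-- orthogonal partition: every even `i ≥ 2` has even multiplicity -/
def Orth (f : ℕ → ℕ) : Prop := ∀ i, Even i → 1 ≤ i → Even (mult f i)

/-- `λ_{2j-1} ≡ λ_{2j} (mod 2)` for all `j ≥ 1` (speciality for symplectic
partitions of `2n` and orthogonal partitions of `2n`). -/
def SpecialPairs (f : ℕ → ℕ) : Prop := ∀ j, 1 ≤ j → f (2*j - 1) % 2 = f (2*j) % 2

/-- speciality for orthogonal partitions of `2n+1`: `λ_1` odd and
`λ_{2j} ≡ λ_{2j+1} (mod 2)` for all `j ≥ 1`. -/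
def SpecialOrthOdd (f : ℕ → ℕ) : Prop :=
  Odd (f 1) ∧ ∀ j, 1 ≤ j → f (2*j) % 2 = f (2*j + 1) % 2

/-- `Jord_bp` for symplectic partitions: even `i ≥ 2` with positive multiplicity -/
def JordbpS (f : ℕ → ℕ) : Set ℕ := {i | Even i ∧ 2 ≤ i ∧ 1 ≤ mult f i}

/-- `Jord_bp` for orthogonal partitions: odd `i ≥ 1` with positive multiplicity -/
def JordbpO (f : ℕ → ℕ) : Set ℕ := {i | Odd i ∧ 1 ≤ mult f i}

/-- the set `{i_1 > … > i_m}` of terms with odd multiplicity -/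
def OddSet (f : ℕ → ℕ) : Set ℕ := {i | Odd (mult f i)}

/-- for special symplectic partitions: `{i_1 > … > i_{m'}}`, with `0` added if `m` is odd -/
def Dsymp (f : ℕ → ℕ) : Set ℕ :=
  {i | Odd (mult f i) ∨ (i = 0 ∧ Odd (OddSet f).ncard)}

/-- `a = i_{2h-1}` and `b = i_{2h}` for some `h`: consecutive elements of `Dsymp f`
with an even number of elements of `Dsymp f` above `a`. -/
def PairedS (f : ℕ → ℕ) (a b : ℕ) : Prop :=
  b < a ∧ a ∈ Dsymp f ∧ b ∈ Dsymp f ∧ Even ((Dsymp f ∩ Set.Ioi a).ncard) ∧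
    Dsymp f ∩ Set.Ioo b a = ∅

/-- intervals of a special symplectic partition of `2n` -/
def IsIntervalS (f : ℕ → ℕ) (Δ : Set ℕ) : Prop :=
  (∃ a b, PairedS f a b ∧ Δ = {i | (i = 0 ∨ 1 ≤ mult f i) ∧ b ≤ i ∧ i ≤ a}) ∨
  (∃ i, Even i ∧ (i = 0 ∨ (2 ≤ i ∧ 1 ≤ mult f i)) ∧
    (¬ ∃ a b, PairedS f a b ∧ b ≤ i ∧ i ≤ a) ∧ Δ = {i})

/-- `a = i_{2h-1}` and `b = i_{2h}` for some `h` (orthogonal partitions of `2n`) -/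
def PairedOE (f : ℕ → ℕ) (a b : ℕ) : Prop :=
  b < a ∧ a ∈ OddSet f ∧ b ∈ OddSet f ∧ Even ((OddSet f ∩ Set.Ioi a).ncard) ∧
    OddSet f ∩ Set.Ioo b a = ∅

/-- intervals of a special orthogonal partition of `2n` -/
def IsIntervalOE (f : ℕ → ℕ) (Δ : Set ℕ) : Prop :=
  (∃ a b, PairedOE f a b ∧ Δ = {i | 1 ≤ mult f i ∧ b ≤ i ∧ i ≤ a}) ∨
  (∃ i, Odd i ∧ 1 ≤ mult f i ∧ (¬ ∃ a b, PairedOE f a b ∧ b ≤ i ∧ i ≤ a) ∧ Δ = {i})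

/-- `a = i_{2h}` and `b = i_{2h+1}` for some `h ≥ 1` (orthogonal partitions of `2n+1`) -/
def PairedOO (f : ℕ → ℕ) (a b : ℕ) : Prop :=
  b < a ∧ a ∈ OddSet f ∧ b ∈ OddSet f ∧ Odd ((OddSet f ∩ Set.Ioi a).ncard) ∧
    OddSet f ∩ Set.Ioo b a = ∅

/-- intervals of a special orthogonal partition of `2n+1` (convention `i_0 = ∞`) -/
def IsIntervalOO (f : ℕ → ℕ) (Δ : Set ℕ) : Prop :=
  (∃ b, b ∈ OddSet f ∧ OddSet f ∩ Set.Ioi b = ∅ ∧ Δ = {i | 1 ≤ mult f i ∧ b ≤ i}) ∨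
  (∃ a b, PairedOO f a b ∧ Δ = {i | 1 ≤ mult f i ∧ b ≤ i ∧ i ≤ a}) ∨
  (∃ i, Odd i ∧ 1 ≤ mult f i ∧
    (¬ ((∃ b, b ∈ OddSet f ∧ OddSet f ∩ Set.Ioi b = ∅ ∧ b ≤ i) ∨
        (∃ a b, PairedOO f a b ∧ b ≤ i ∧ i ≤ a))) ∧ Δ = {i})

/-- `J(Δ) = {j ≥ 1 : λ_j ∈ Δ}` -/
def Jset (f : ℕ → ℕ) (Δ : Set ℕ) : Set ℕ := {j | 1 ≤ j ∧ f j ∈ Δ}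

/-- `ζ(λ)` for a special symplectic partition (`j_max(Δ_min) = ∞`, so the smallest
interval contributes no `-1`: its `J`-set has no greatest element). -/
noncomputable def zetaS (f : ℕ → ℕ) : ℕ → ℤ := fun j =>
  if ∃ Δ, IsIntervalS f Δ ∧ IsLeast (Jset f Δ) j then 1
  else if ∃ Δ, IsIntervalS f Δ ∧ IsGreatest (Jset f Δ) j then -1
  else 0

/-- `ζ(λ)` for a special orthogonal partition of `2n` -/
noncomputable def zetaOE (f : ℕ → ℕ) : ℕ → ℤ := fun j =>
  if ∃ Δ, IsIntervalOE f Δ ∧ IsLeast (Jset f Δ) j then 1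
  else if ∃ Δ, IsIntervalOE f Δ ∧ IsGreatest (Jset f Δ) j then -1
  else 0

/-- `J^+` for `λ1` special symplectic and `λ2` special orthogonal (of `2n2`) -/
def JplusSet (f1 f2 : ℕ → ℕ) : Set ℕ :=
  {j | 1 ≤ j ∧ Even (f1 j) ∧ Odd (f2 j) ∧
    ((∃ Δ, IsIntervalS f1 Δ ∧ IsLeast (Jset f1 Δ) j) ∨
     (∃ Δ, IsIntervalOE f2 Δ ∧ IsLeast (Jset f2 Δ) j))}

/-- `J^-` -/
def JminusSet (f1 f2 : ℕ → ℕ) : Set ℕ :=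
  {j | 1 ≤ j ∧ Even (f1 j) ∧ Odd (f2 j) ∧
    ((∃ Δ, IsIntervalS f1 Δ ∧ IsGreatest (Jset f1 Δ) j) ∨
     (∃ Δ, IsIntervalOE f2 Δ ∧ IsGreatest (Jset f2 Δ) j))}

/-- the sequence `ξ` -/
noncomputable def xi (f1 f2 : ℕ → ℕ) : ℕ → ℤ := fun j =>
  if j ∈ JplusSet f1 f2 then 1 else if j ∈ JminusSet f1 f2 then -1 else 0

/-- partial sums of an integer-valued sequence indexed from 1 -/
def Sz (f : ℕ → ℤ) (k : ℕ) : ℤ := ∑ j ∈ Finset.Icc 1 k, f j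

/-- `g` is the greatest orthogonal partition of `N` which is dominated by the
sequence `t` (used to define the Spaltenstein-type duality `d`). -/
def IsDualOf (g : ℕ → ℕ) (N : ℕ) (t : ℕ → ℕ) : Prop :=
  (IsPartition g N ∧ Orth g ∧ Dom g t) ∧
  ∀ ν, IsPartition ν N → Orth ν → Dom ν t → Dom ν g

/-- `g = d(f)` for `f` a symplectic partition of `2m`: the greatest orthogonal
partition of `2m+1` dominated by `^t(f ∪ (1))`. -/
def IsSympDual (g : ℕ → ℕ) (m : ℕ) (f : ℕ → ℕ) : Prop :=
  IsDualOf g (2*m+1) (transpose (unionP f one1))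

/-- `g = d(f)` for `f` an orthogonal partition of `2m`: the greatest orthogonal
partition of `2m` dominated by `^tf`. -/
def IsOrthDual (g : ℕ → ℕ) (m : ℕ) (f : ℕ → ℕ) : Prop :=
  IsDualOf g (2*m) (transpose f)

/-
For `i ≥ 1` the multiplicity of `i` in `ᵗλ` is `λ_i - λ_{i+1}`, so `ᵗλ` is symplectic exactly when
`λ_i ≡ λ_{i+1} (mod 2)` for every odd `i`, which is the speciality condition. That `ᵗλ` is again a
partition of `2n` is double counting of the boxes of the Young diagram.
-/

section Transpose

variable {f : ℕ → ℕ} {N : ℕ}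

lemma transpose_eq_card_filter {m : ℕ} (hm : ∀ k, m < k → f k = 0) {j : ℕ} (hj : 1 ≤ j) :
    transpose f j = ((Finset.Icc 1 m).filter (fun k => j ≤ f k)).card := by
  rw [transpose, ← Set.ncard_coe_finset]
  congr 1
  ext k
  simp only [Set.mem_ofPred_eq, Finset.coe_filter, Finset.mem_Icc]
  constructor
  · rintro ⟨hk, -, hjk⟩
    refine ⟨⟨hk, ?_⟩, hjk⟩
    by_contra! hmk
    have := hm k hmk
    omega
  · rintro ⟨⟨hk, -⟩, hjk⟩
    exact ⟨hk, hj, hjk⟩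

lemma IsPartition.le_transpose_iff (hf : IsPartition f N) {i j : ℕ} (hi : 1 ≤ i) (hj : 1 ≤ j) :
    i ≤ transpose f j ↔ j ≤ f i := by
  obtain ⟨m, hm⟩ := hf.fin
  rw [transpose_eq_card_filter hm hj]
  constructor
  · intro hcard
    by_contra! hfi
    have hsub : (Finset.Icc 1 m).filter (fun k => j ≤ f k) ⊆ Finset.Ico 1 i := by
      intro k hk
      simp only [Finset.mem_filter, Finset.mem_Icc, Finset.mem_Ico] at hk ⊢
      refine ⟨hk.1.1, ?_⟩
      by_contra! hik
      have := hf.mono hi hik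
      omega
    have := Finset.card_le_card hsub
    rw [Nat.card_Ico] at this
    omega
  · intro hfi
    have hsub : Finset.Icc 1 i ⊆ (Finset.Icc 1 m).filter (fun k => j ≤ f k) := by
      intro k hk
      simp only [Finset.mem_filter, Finset.mem_Icc] at hk ⊢
      have hfk : j ≤ f k := hfi.trans (hf.mono hk.1 hk.2)
      refine ⟨⟨hk.1, ?_⟩, hfk⟩
      by_contra! hmk
      have := hm k hmk
      omega
    simpa [Nat.card_Icc] using Finset.card_le_card hsub

lemma IsPartition.mult_transpose (hf : IsPartition f N) {i : ℕ} (hi : 1 ≤ i) :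
    mult (transpose f) i = f i - f (i + 1) := by
  have hset : {j : ℕ | 1 ≤ j ∧ transpose f j = i} = ↑(Finset.Ioc (f (i + 1)) (f i)) := by
    ext j
    simp only [Set.mem_ofPred_eq, Finset.coe_Ioc, Set.mem_Ioc]
    constructor
    · rintro ⟨hj, hji⟩
      have hle := (hf.le_transpose_iff hi hj).mp hji.ge
      have hnot := (hf.le_transpose_iff (by omega : 1 ≤ i + 1) hj).not.mp (by omega)
      omega
    · rintro ⟨hlt, hle⟩
      have hj : 1 ≤ j := by omega
      have hge := (hf.le_transpose_iff hi hj).mpr hle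
      have hnot := (hf.le_transpose_iff (by omega : 1 ≤ i + 1) hj).not.mpr (by omega)
      exact ⟨hj, by omega⟩
  rw [mult, hset, Set.ncard_coe_finset, Nat.card_Ioc]

lemma IsPartition.sum_transpose (hf : IsPartition f N) {m M : ℕ} (hm : ∀ k, m < k → f k = 0)
    (hM : f 1 ≤ M) : S (transpose f) M = S f m := by
  have hrow : ∀ j ∈ Finset.Icc 1 M,
      transpose f j = ∑ k ∈ Finset.Icc 1 m, if j ≤ f k then 1 else 0 := by
    intro j hj
    rw [transpose_eq_card_filter hm (Finset.mem_Icc.mp hj).1, Finset.card_filter]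
  have hcol : ∀ k ∈ Finset.Icc 1 m,
      (∑ j ∈ Finset.Icc 1 M, if j ≤ f k then 1 else 0) = f k := by
    intro k hk
    have hfk : f k ≤ M := (hf.mono le_rfl (Finset.mem_Icc.mp hk).1).trans hM
    rw [← Finset.card_filter,
      show (Finset.Icc 1 M).filter (· ≤ f k) = Finset.Icc 1 (f k) by
        ext; simp only [Finset.mem_filter, Finset.mem_Icc]; omega,
      Nat.card_Icc, Nat.add_sub_cancel]
  rw [S, Finset.sum_congr rfl hrow, Finset.sum_comm, Finset.sum_congr rfl hcol, S]

lemma IsPartition.transpose (hf : IsPartition f N) : IsPartition (transpose f) N where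
  mono j k hj hjk := by
    rcases Nat.eq_zero_or_pos (Wald.transpose f k) with h0 | hpos
    · simp [h0]
    · exact (hf.le_transpose_iff hpos hj).mpr
        (hjk.trans ((hf.le_transpose_iff hpos (hj.trans hjk)).mp le_rfl))
  fin := ⟨f 1, fun j hj => by
    by_contra! hpos
    have := (hf.le_transpose_iff le_rfl (by omega)).mp (Nat.one_le_iff_ne_zero.mpr hpos)
    omega⟩
  total M hM := by
    obtain ⟨m, hm⟩ := hf.fin
    have hM1 : f 1 ≤ M := by
      by_contra! hlt
      have := (hf.le_transpose_iff le_rfl (Nat.le_add_left 1 M)).mpr hlt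
      have := hM (M + 1) (Nat.lt_succ_self M)
      omega
    rw [hf.sum_transpose hm hM1, hf.total m hm]

lemma IsPartition.symp_transpose_iff (hf : IsPartition f N) :
    Symp (Wald.transpose f) ↔ SpecialPairs f := by
  have hpair : ∀ j, 1 ≤ j →
      (Even (mult (Wald.transpose f) (2 * j - 1)) ↔ f (2 * j - 1) % 2 = f (2 * j) % 2) := by
    intro j hj
    have hsucc : 2 * j - 1 + 1 = 2 * j := by omega
    rw [hf.mult_transpose (by omega), hsucc,
      Nat.even_sub (hf.mono (by omega) (by omega)), Nat.even_iff, Nat.even_iff]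
    omega
  constructor
  · intro hs j hj
    exact (hpair j hj).mp (hs _ ⟨j - 1, by omega⟩)
  · rintro hsp i ⟨k, rfl⟩
    have := (hpair (k + 1) (by omega)).mpr (hsp (k + 1) (by omega))
    rwa [show 2 * (k + 1) - 1 = 2 * k + 1 by omega] at this

end Transpose

theorem stmt8_general (n : ℕ) (f : ℕ → ℕ) (hpart : IsPartition f (2*n)) :
    SpecialPairs f ↔ (IsPartition (transpose f) (2*n) ∧ Symp (transpose f)) := by
  rw [hpart.symp_transpose_iff]
  exact ⟨fun hsp => ⟨hpart.transpose, hsp⟩, And.right⟩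

/-- A symplectic partition of `2n` is special iff its transpose is symplectic. -/
theorem stmt8 (n : ℕ) (f : ℕ → ℕ) (hpart : IsPartition f (2*n)) (hsymp : Symp f) :
    SpecialPairs f ↔ (IsPartition (transpose f) (2*n) ∧ Symp (transpose f)) :=
  stmt8_general n f hpart

end Wald
end

section
/- Let λ be a special symplectic partition of 2n. Then every interval of λ consists of even integers, and the intervals of λ form a partition of the set Jord_bp(λ) ∪ {0}: they are pairwise disjoint, nonempty, and their union is Jord_bp(λ) ∪ {0}. -/
open Classical

namespace Wald

/-!
The number of parts exceeding `i` has the parity of the number of values of odd multiplicity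
above `i`. For an odd part `i` it is even, by a descent using speciality, so an odd part never
lies between `i_{2h}` and `i_{2h-1}` and the intervals consist of even integers. Disjointness and
covering come from the consecutive pairs `i_{2h-1} > i_{2h}` never sharing an endpoint.
-/

section Counting

variable {f : ℕ → ℕ} {M : ℕ}

/-- `#{j ≤ M : λ_j > i}`; `M` is a bound on the length of the partition. -/
noncomputable def countAbove (f : ℕ → ℕ) (M i : ℕ) : ℕ :=
  {j ∈ Finset.Icc 1 M | i < f j}.card

lemma le_of_lt_apply (hM : ∀ j, M < j → f j = 0) {i j : ℕ} (h : i < f j) : j ≤ M := by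
  by_contra hj
  rw [hM j (by omega)] at h
  omega

lemma lt_apply_iff_le_countAbove (hf : AntitoneOn f (Set.Ici 1)) (hM : ∀ j, M < j → f j = 0)
    {i j : ℕ} (hj : 1 ≤ j) : i < f j ↔ j ≤ countAbove f M i := by
  constructor
  · intro h
    have hsub : Finset.Icc 1 j ⊆ {k ∈ Finset.Icc 1 M | i < f k} := by
      intro k hk
      rw [Finset.mem_Icc] at hk
      simp only [Finset.mem_filter, Finset.mem_Icc]
      exact ⟨⟨hk.1, hk.2.trans (le_of_lt_apply hM h)⟩, h.trans_le (hf hk.1 hj hk.2)⟩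
    simpa [countAbove] using Finset.card_le_card hsub
  · intro h
    by_contra hle
    have hsub : {k ∈ Finset.Icc 1 M | i < f k} ⊆ Finset.Icc 1 (j - 1) := by
      intro k hk
      simp only [Finset.mem_filter, Finset.mem_Icc] at hk ⊢
      refine ⟨hk.1.1, ?_⟩
      by_contra hkj
      have := hf hj hk.1.1 (show j ≤ k by omega)
      omega
    have := Finset.card_le_card hsub
    simp only [Nat.card_Icc] at this
    unfold countAbove at h
    omega

lemma countAbove_eq (hf : AntitoneOn f (Set.Ici 1)) (hM : ∀ j, M < j → f j = 0)
    {i j : ℕ} (hj : 1 ≤ j) (hlt : i < f j) (hle : f (j + 1) ≤ i) : countAbove f M i = j := by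
  refine le_antisymm ?_ ((lt_apply_iff_le_countAbove hf hM hj).1 hlt)
  by_contra h
  have := (lt_apply_iff_le_countAbove hf hM (i := i) (Nat.le_add_left 1 j)).2 (by omega)
  omega

lemma mult_eq_card (hM : ∀ j, M < j → f j = 0) {i : ℕ} (hi : 1 ≤ i) :
    mult f i = {j ∈ Finset.Icc 1 M | f j = i}.card := by
  rw [mult, ← Set.ncard_coe_finset]
  congr 1
  ext j
  simp only [Finset.coe_filter, Finset.mem_Icc, Set.mem_ofPred_eq]
  constructor
  · rintro ⟨hj, rfl⟩
    exact ⟨⟨hj, le_of_lt_apply hM (i := 0) hi⟩, rfl⟩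
  · rintro ⟨⟨hj, -⟩, rfl⟩
    exact ⟨hj, rfl⟩

lemma mult_zero (hM : ∀ j, M < j → f j = 0) : mult f 0 = 0 :=
  Set.Infinite.ncard <| (Set.Ioi_infinite M).mono fun j hj =>
    ⟨by have : M < j := hj; omega, hM j hj⟩

lemma countAbove_eq_countAbove_succ_add_mult (hM : ∀ j, M < j → f j = 0) (i : ℕ) :
    countAbove f M i = countAbove f M (i + 1) + mult f (i + 1) := by
  rw [mult_eq_card hM (Nat.le_add_left 1 i), countAbove, countAbove,
    ← Finset.card_union_of_disjoint (Finset.disjoint_filter.2 fun _ _ h h' => by omega),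
    ← Finset.filter_or]
  congr 1
  ext j
  simp only [Finset.mem_filter]
  exact and_congr_right fun _ => by omega

lemma le_apply_one_of_mult_pos (hf : AntitoneOn f (Set.Ici 1)) {i : ℕ} (hi : 1 ≤ mult f i) :
    i ≤ f 1 := by
  obtain ⟨j, hj, rfl⟩ := Set.nonempty_of_ncard_ne_zero (s := {j | 1 ≤ j ∧ f j = i})
    (by rw [mult] at hi; omega)
  exact hf Set.self_mem_Ici hj hj

lemma countAbove_eq_sum_mult (hf : AntitoneOn f (Set.Ici 1)) (hM : ∀ j, M < j → f j = 0)
    (i : ℕ) : countAbove f M i = ∑ k ∈ Finset.Ioc i (f 1), mult f k := by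
  have hmaps : ∀ j ∈ {j ∈ Finset.Icc 1 M | i < f j}, f j ∈ Finset.Ioc i (f 1) := by
    intro j hj
    simp only [Finset.mem_filter, Finset.mem_Icc] at hj
    exact Finset.mem_Ioc.2 ⟨hj.2, hf Set.self_mem_Ici hj.1.1 hj.1.1⟩
  rw [countAbove, Finset.card_eq_sum_card_fiberwise hmaps]
  refine Finset.sum_congr rfl fun k hk => ?_
  rw [Finset.mem_Ioc] at hk
  rw [mult_eq_card hM (by omega : 1 ≤ k), Finset.filter_filter]
  congr 1
  ext j
  simp only [Finset.mem_filter]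
  constructor
  · rintro ⟨hj, -, rfl⟩
    exact ⟨hj, rfl⟩
  · rintro ⟨hj, rfl⟩
    exact ⟨hj, hk.1, rfl⟩

lemma even_countAbove_iff (hf : AntitoneOn f (Set.Ici 1)) (hM : ∀ j, M < j → f j = 0)
    (i : ℕ) : Even (countAbove f M i) ↔ Even (OddSet f ∩ Set.Ioi i).ncard := by
  have hset : OddSet f ∩ Set.Ioi i = ↑{k ∈ Finset.Ioc i (f 1) | Odd (mult f k)} := by
    ext k
    simp only [Set.mem_inter_iff, Set.mem_Ioi, Finset.coe_filter, Set.mem_ofPred_eq,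
      Finset.mem_Ioc, OddSet]
    exact ⟨fun ⟨hk, hik⟩ => ⟨⟨hik, le_apply_one_of_mult_pos hf hk.pos⟩, hk⟩,
      fun ⟨⟨hik, _⟩, hk⟩ => ⟨hk, hik⟩⟩
  rw [countAbove_eq_sum_mult hf hM, Finset.even_sum_iff_even_card_odd, hset,
    Set.ncard_coe_finset]

/-- If an odd number `N` of parts exceeds the odd part `i`, speciality makes `λ_N` odd; its
block has even length and ends at `N`, so an odd number of parts exceeds the larger odd part
`λ_N`, and we descend. -/
theorem even_countAbove_of_odd (hf : AntitoneOn f (Set.Ici 1)) (hM : ∀ j, M < j → f j = 0)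
    (hsymp : Symp f) (hspec : SpecialPairs f) {i : ℕ} (hi : Odd i) (hmult : 1 ≤ mult f i) :
    Even (countAbove f M i) := by
  induction hk : f 1 - i using Nat.strong_induction_on generalizing i with
  | _ k ih =>
  by_contra hodd
  set N := countAbove f M i
  obtain ⟨t, ht⟩ := Nat.not_even_iff_odd.mp hodd
  have hN1 : f (N + 1) = i := by
    have hstep := countAbove_eq_countAbove_succ_add_mult hM (i - 1)
    rw [Nat.sub_add_cancel hi.pos] at hstep
    have hlt := (lt_apply_iff_le_countAbove hf hM (i := i - 1) (Nat.le_add_left 1 N)).2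
      (by omega)
    have hle := (lt_apply_iff_le_countAbove hf hM (i := i) (Nat.le_add_left 1 N)).not.2
      (by omega)
    omega
  have hiN : i < f N := (lt_apply_iff_le_countAbove hf hM (by omega)).2 le_rfl
  have hoddN : Odd (f N) := by
    have hpair := hspec (t + 1) (by omega)
    rw [show 2 * (t + 1) - 1 = N by omega, show 2 * (t + 1) = N + 1 by omega, hN1] at hpair
    rw [Nat.odd_iff] at hi ⊢
    omega
  have hblock : countAbove f M (f N) + mult f (f N) = N := by
    rw [← Nat.sub_add_cancel hoddN.pos, ← countAbove_eq_countAbove_succ_add_mult hM]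
    exact countAbove_eq hf hM (by omega) (by omega) (by omega)
  have habove : countAbove f M (f N) < N :=
    Nat.lt_of_not_le ((lt_apply_iff_le_countAbove hf hM (by omega)).not.1 (lt_irrefl _))
  have hmultN : Even (mult f (f N)) := hsymp _ hoddN
  have hle1 : f N ≤ f 1 := hf Set.self_mem_Ici (by omega : 1 ≤ N) (by omega : 1 ≤ N)
  have hevenN := ih (f 1 - f N) (by omega) hoddN (by omega) rfl
  rw [← hblock] at ht
  exact Nat.not_even_iff_odd.2 ⟨t, ht⟩ (hevenN.add hmultN)

end Counting

section Intervals

variable {f : ℕ → ℕ} {M : ℕ}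

lemma even_of_mem_Dsymp (hsymp : Symp f) {i : ℕ} (hi : i ∈ Dsymp f) : Even i := by
  rcases hi with hodd | ⟨rfl, -⟩
  · exact Nat.not_odd_iff_even.1 fun h => Nat.not_even_iff_odd.2 hodd (hsymp i h)
  · exact Even.zero

lemma Dsymp_finite (hf : AntitoneOn f (Set.Ici 1)) : (Dsymp f).Finite := by
  refine (Set.finite_Iic (f 1)).subset fun i hi => ?_
  rcases hi with hodd | ⟨rfl, -⟩
  · exact le_apply_one_of_mult_pos hf hodd.pos
  · exact Nat.zero_le _

namespace PairedS

variable {a b : ℕ}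

lemma notMem_Ioo (h : PairedS f a b) {c : ℕ} (hc : c ∈ Dsymp f) : c ∉ Set.Ioo b a :=
  fun hbca => (h.2.2.2.2 ▸ ⟨hc, hbca⟩ : c ∈ (∅ : Set ℕ))

lemma Dsymp_inter_Ioi_right (h : PairedS f a b) :
    Dsymp f ∩ Set.Ioi b = insert a (Dsymp f ∩ Set.Ioi a) := by
  ext x
  simp only [Set.mem_inter_iff, Set.mem_Ioi, Set.mem_insert_iff]
  constructor
  · rintro ⟨hx, hbx⟩
    rcases lt_trichotomy x a with hxa | rfl | hax
    · exact (h.notMem_Ioo hx ⟨hbx, hxa⟩).elim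
    · exact Or.inl rfl
    · exact Or.inr ⟨hx, hax⟩
  · rintro (rfl | ⟨hx, hax⟩)
    · exact ⟨h.2.1, h.1⟩
    · exact ⟨hx, h.1.trans hax⟩

lemma odd_ncard_Dsymp_inter_Ioi_right (hf : AntitoneOn f (Set.Ici 1)) (h : PairedS f a b) :
    Odd (Dsymp f ∩ Set.Ioi b).ncard := by
  rw [h.Dsymp_inter_Ioi_right, Set.ncard_insert_of_notMem (s := Dsymp f ∩ Set.Ioi a)
    (fun hc => lt_irrefl a hc.2) ((Dsymp_finite hf).inter_of_left _)]
  exact h.2.2.2.1.add_one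

lemma right_unique {b' : ℕ} (h : PairedS f a b) (h' : PairedS f a b') : b = b' := by
  by_contra hne
  rcases Nat.lt_or_gt_of_ne hne with hlt | hlt
  · exact h.notMem_Ioo h'.2.2.1 ⟨hlt, h'.1⟩
  · exact h'.notMem_Ioo h.2.2.1 ⟨hlt, h.1⟩

/-- Consecutive pairs share no endpoint: the count of `Dsymp f` above `b` is odd, while above
the left end of a pair it is even. -/
lemma lt_right_of_lt_left (hf : AntitoneOn f (Set.Ici 1)) {a' b' : ℕ} (h : PairedS f a b)
    (h' : PairedS f a' b') (ha : a' < a) : a' < b := by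
  rcases lt_trichotomy a' b with hlt | rfl | hgt
  · exact hlt
  · exact absurd h'.2.2.2.1 (Nat.not_even_iff_odd.2 (h.odd_ncard_Dsymp_inter_Ioi_right hf))
  · exact (h.notMem_Ioo h'.2.1 ⟨hgt, ha⟩).elim

lemma even_of_mem (hf : AntitoneOn f (Set.Ici 1)) (hM : ∀ j, M < j → f j = 0)
    (hsymp : Symp f) (hspec : SpecialPairs f) (h : PairedS f a b) {i : ℕ}
    (hi : i = 0 ∨ 1 ≤ mult f i) (hbi : b ≤ i) (hia : i ≤ a) : Even i := by
  by_contra hodd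
  rw [Nat.not_even_iff_odd] at hodd
  have hmult : 1 ≤ mult f i := hi.resolve_left fun h0 => by simp [h0] at hodd
  have hparity {c : ℕ} (hc : c ∈ Dsymp f) : c ≠ i := fun hci =>
    Nat.not_even_iff_odd.2 hodd (hci ▸ even_of_mem_Dsymp hsymp hc)
  have hia' : i < a := lt_of_le_of_ne hia (hparity h.2.1).symm
  have habove : Dsymp f ∩ Set.Ioi b = OddSet f ∩ Set.Ioi i := by
    ext x
    simp only [Set.mem_inter_iff, Set.mem_Ioi]
    constructor
    · rintro ⟨hx, hbx⟩
      have hax : a ≤ x := not_lt.1 fun hxa => h.notMem_Ioo hx ⟨hbx, hxa⟩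
      exact ⟨hx.resolve_right fun hx0 => by omega, by omega⟩
    · rintro ⟨hx, hix⟩
      exact ⟨Or.inl hx, lt_of_le_of_lt hbi hix⟩
  have heven := (even_countAbove_iff hf hM i).1
    (even_countAbove_of_odd hf hM hsymp hspec hodd hmult)
  rw [← habove] at heven
  exact Nat.not_even_iff_odd.2 (h.odd_ncard_Dsymp_inter_Ioi_right hf) heven

end PairedS

namespace IsIntervalS

variable {Δ Δ' : Set ℕ}

lemma even_of_mem (hf : AntitoneOn f (Set.Ici 1)) (hM : ∀ j, M < j → f j = 0)
    (hsymp : Symp f) (hspec : SpecialPairs f) (hΔ : IsIntervalS f Δ) {i : ℕ} (hi : i ∈ Δ) :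
    Even i := by
  rcases hΔ with ⟨a, b, hab, rfl⟩ | ⟨k, hk, -, -, rfl⟩
  · exact hab.even_of_mem hf hM hsymp hspec hi.1 hi.2.1 hi.2.2
  · exact Set.mem_singleton_iff.1 hi ▸ hk

lemma nonempty (hΔ : IsIntervalS f Δ) : Δ.Nonempty := by
  rcases hΔ with ⟨a, b, hab, rfl⟩ | ⟨k, -, -, -, rfl⟩
  · refine ⟨a, ?_, hab.1.le, le_rfl⟩
    rcases hab.2.1 with hodd | ⟨rfl, -⟩
    · exact Or.inr hodd.pos
    · exact Or.inl rfl
  · exact Set.singleton_nonempty k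

lemma disjoint (hf : AntitoneOn f (Set.Ici 1)) (hΔ : IsIntervalS f Δ) (hΔ' : IsIntervalS f Δ')
    (hne : Δ ≠ Δ') : Disjoint Δ Δ' := by
  rw [Set.disjoint_left]
  intro x hx hx'
  rcases hΔ with ⟨a, b, hab, rfl⟩ | ⟨k, -, -, hk, rfl⟩ <;>
    rcases hΔ' with ⟨a', b', hab', rfl⟩ | ⟨k', -, -, hk', rfl⟩
  · obtain ⟨-, hbx, hxa⟩ := hx
    obtain ⟨-, hbx', hxa'⟩ := hx'
    rcases lt_trichotomy a a' with hlt | rfl | hgt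
    · have := hab'.lt_right_of_lt_left hf hab hlt
      omega
    · exact hne (by rw [hab.right_unique hab'])
    · have := hab.lt_right_of_lt_left hf hab' hgt
      omega
  · obtain rfl := Set.mem_singleton_iff.1 hx'
    exact hk' ⟨a, b, hab, hx.2.1, hx.2.2⟩
  · obtain rfl := Set.mem_singleton_iff.1 hx
    exact hk ⟨a', b', hab', hx'.2.1, hx'.2.2⟩
  · obtain rfl := Set.mem_singleton_iff.1 hx
    obtain rfl := Set.mem_singleton_iff.1 hx'
    exact hne rfl

end IsIntervalS

lemma sUnion_setOf_isIntervalS (hf : AntitoneOn f (Set.Ici 1)) (hM : ∀ j, M < j → f j = 0)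
    (hsymp : Symp f) (hspec : SpecialPairs f) :
    ⋃₀ {Δ | IsIntervalS f Δ} = JordbpS f ∪ {0} := by
  ext x
  simp only [Set.mem_sUnion, Set.mem_ofPred_eq, Set.mem_union, Set.mem_singleton_iff]
  constructor
  · rintro ⟨Δ, hΔ, hx⟩
    have hev := hΔ.even_of_mem hf hM hsymp hspec hx
    rcases hΔ with ⟨a, b, -, rfl⟩ | ⟨k, -, hk, -, rfl⟩
    · rcases hx.1 with rfl | hm
      · exact Or.inr rfl
      · have hx0 : x ≠ 0 := by
          rintro rfl
          rw [mult_zero hM] at hm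
          omega
        obtain ⟨t, rfl⟩ := hev
        exact Or.inl ⟨⟨t, rfl⟩, by omega, hm⟩
    · obtain rfl := Set.mem_singleton_iff.1 hx
      rcases hk with rfl | hk
      · exact Or.inr rfl
      · exact Or.inl ⟨hev, hk⟩
  · intro hx
    by_cases hcov : ∃ a b, PairedS f a b ∧ b ≤ x ∧ x ≤ a
    · obtain ⟨a, b, hab, hbx, hxa⟩ := hcov
      refine ⟨_, Or.inl ⟨a, b, hab, rfl⟩, ?_, hbx, hxa⟩
      rcases hx with ⟨-, -, hm⟩ | rfl
      · exact Or.inr hm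
      · exact Or.inl rfl
    · refine ⟨{x}, Or.inr ⟨x, ?_, ?_, hcov, rfl⟩, rfl⟩ <;>
        rcases hx with ⟨hev, h2, hm⟩ | rfl
      · exact hev
      · exact Even.zero
      · exact Or.inr ⟨h2, hm⟩
      · exact Or.inl rfl

end Intervals

/-- Section 1.3: the intervals of a special symplectic partition of `2n` consist
of even integers and form a partition of `Jord_bp(λ) ∪ {0}`. -/
theorem stmt11 (n : ℕ) (f : ℕ → ℕ)
    (hpart : IsPartition f (2*n)) (hsymp : Symp f) (hspec : SpecialPairs f) :
    (∀ Δ, IsIntervalS f Δ → ∀ i ∈ Δ, Even i) ∧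
    (∀ Δ, IsIntervalS f Δ → Δ.Nonempty) ∧
    (∀ Δ Δ', IsIntervalS f Δ → IsIntervalS f Δ' → Δ ≠ Δ' → Disjoint Δ Δ') ∧
    ⋃₀ {Δ | IsIntervalS f Δ} = JordbpS f ∪ {0} := by
  obtain ⟨M, hM⟩ := hpart.fin
  have hf : AntitoneOn f (Set.Ici 1) := fun j hj _ _ hjk => hpart.mono hj hjk
  exact ⟨fun _ hΔ _ => hΔ.even_of_mem hf hM hsymp hspec, fun _ => IsIntervalS.nonempty,
    fun _ _ hΔ hΔ' => hΔ.disjoint hf hΔ', sUnion_setOf_isIntervalS hf hM hsymp hspec⟩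

end Wald
end

section
/- Let λ be a special orthogonal partition of 2n+1. Then: (i) the number m of integers i with mult_λ(i) odd is odd (and all such i are odd); (ii) every interval of λ consists of odd integers; (iii) the intervals of λ form a partition of Jord_bp(λ): they are pairwise disjoint, nonempty, and their union is Jord_bp(λ). -/
open Classical

namespace Wald

/-!
Write `c(v)` for the number of elements of `OddSet f` above `v`. Grouping the parts of `f`
by value, `c(v)` has the parity of the number of parts exceeding `v`, and for a special
orthogonal partition that number is odd whenever `v` is an even part (including `v = 0`).
Taking `v = 0` gives the oddness of `m`. An even member `v` of an interval `[i_{2h+1}, i_{2h}]`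
would have `c(v) = c(i_{2h}) + 1` even, and in the top interval `c(v) = 0`.
Two overlapping intervals could only share an endpoint `i_{2h} = i_{2h'+1}`, where the two
parities of `c` clash; the rest is bookkeeping.
-/

variable {f : ℕ → ℕ} {N : ℕ}

noncomputable def partsAbove (f : ℕ → ℕ) (i : ℕ) : ℕ := {j | 1 ≤ j ∧ i < f j}.ncard

lemma exists_apply_eq_of_one_le_mult {v : ℕ} (h : 1 ≤ mult f v) : ∃ j, 1 ≤ j ∧ f j = v :=
  Set.nonempty_of_ncard_ne_zero (Nat.one_le_iff_ne_zero.1 h)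

lemma inter_Ioi_eq_insert_of_inter_Ioo_eq_empty {α : Type*} [LinearOrder α] {s : Set α}
    {c a : α} (hca : c < a) (ha : a ∈ s) (hgap : s ∩ Set.Ioo c a = ∅) :
    s ∩ Set.Ioi c = insert a (s ∩ Set.Ioi a) := by
  ext v
  simp only [Set.mem_inter_iff, Set.mem_Ioi, Set.mem_insert_iff]
  constructor
  · rintro ⟨hv, hcv⟩
    rcases lt_trichotomy v a with hva | rfl | hav
    · exact (hgap.subset ⟨hv, hcv, hva⟩).elim
    · exact Or.inl rfl
    · exact Or.inr ⟨hv, hav⟩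
  · rintro (rfl | ⟨hv, hav⟩)
    · exact ⟨ha, hca⟩
    · exact ⟨hv, hca.trans hav⟩

namespace IsPartition

lemma exists_apply_eq_zero (hf : IsPartition f N) : ∃ j, 1 ≤ j ∧ f j = 0 := by
  obtain ⟨M, hM⟩ := hf.fin
  exact ⟨M + 1, by omega, hM _ (by omega)⟩

/-- Infinitely many indices carry the part `0`, and `Set.ncard` of an infinite set is `0`. -/
lemma mult_zero (hf : IsPartition f N) : mult f 0 = 0 := by
  obtain ⟨M, hM⟩ := hf.fin
  refine Set.Infinite.ncard (Set.Infinite.mono (fun j hj => ?_) (Set.Ioi_infinite M))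
  exact ⟨by simp only [Set.mem_Ioi] at hj; omega, hM j hj⟩

lemma finite_setOf_lt_apply (hf : IsPartition f N) (i : ℕ) :
    {j | 1 ≤ j ∧ i < f j}.Finite := by
  obtain ⟨M, hM⟩ := hf.fin
  refine (Set.finite_Iic M).subset fun j ⟨_, hij⟩ => ?_
  by_contra hjM
  rw [hM j (not_le.1 hjM)] at hij
  omega

lemma lt_apply_iff_le_partsAbove (hf : IsPartition f N) {i j : ℕ} (hj : 1 ≤ j) :
    i < f j ↔ j ≤ partsAbove f i := by
  constructor
  · intro hij
    have hsub : Set.Icc 1 j ⊆ {k | 1 ≤ k ∧ i < f k} :=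
      fun k hk => ⟨hk.1, hij.trans_le (hf.mono hk.1 hk.2)⟩
    simpa [partsAbove] using Set.ncard_le_ncard hsub (hf.finite_setOf_lt_apply i)
  · intro hjp
    by_contra hij
    have hsub : {k | 1 ≤ k ∧ i < f k} ⊆ Set.Ico 1 j := fun k ⟨hk, hik⟩ =>
      ⟨hk, not_le.1 fun hjk => hij (hik.trans_le (hf.mono hj hjk))⟩
    have := Set.ncard_le_ncard hsub
    simp only [Set.ncard_Ico_nat] at this
    unfold partsAbove at hjp
    omega

lemma partsAbove_eq_of_lt_of_le (hf : IsPartition f N) {i q : ℕ} (hq : 1 ≤ q)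
    (hlt : i < f q) (hle : f (q + 1) ≤ i) : partsAbove f i = q := by
  refine le_antisymm ?_ ((hf.lt_apply_iff_le_partsAbove hq).1 hlt)
  by_contra! h
  exact absurd ((hf.lt_apply_iff_le_partsAbove (by omega)).2 h) (not_lt.2 hle)

lemma apply_partsAbove_add_one (hf : IsPartition f N) {j : ℕ} (hj : 1 ≤ j) :
    f (partsAbove f (f j) + 1) = f j := by
  have hjp : partsAbove f (f j) < j :=
    not_le.1 fun h => lt_irrefl _ ((hf.lt_apply_iff_le_partsAbove hj).2 h)
  have hge : f j ≤ f (partsAbove f (f j) + 1) := hf.mono (by omega) hjp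
  have hle : ¬ f j < f (partsAbove f (f j) + 1) := fun h =>
    absurd ((hf.lt_apply_iff_le_partsAbove (by omega)).1 h) (by omega)
  omega

lemma partsAbove_eq_partsAbove_succ_add_mult (hf : IsPartition f N) (i : ℕ) :
    partsAbove f i = partsAbove f (i + 1) + mult f (i + 1) := by
  have hsplit : {j | 1 ≤ j ∧ i < f j} =
      {j | 1 ≤ j ∧ i + 1 < f j} ∪ {j | 1 ≤ j ∧ f j = i + 1} := by
    ext j
    simp only [Set.mem_ofPred_eq, Set.mem_union]
    omega
  have hdisj : Disjoint {j | 1 ≤ j ∧ i + 1 < f j} {j | 1 ≤ j ∧ f j = i + 1} :=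
    Set.disjoint_left.2 fun j hj hj' => by simp only [Set.mem_ofPred_eq] at hj hj'; omega
  have hfin : {j | 1 ≤ j ∧ f j = i + 1}.Finite :=
    (hf.finite_setOf_lt_apply i).subset fun j ⟨hj, hji⟩ => ⟨hj, by omega⟩
  rw [partsAbove, hsplit, Set.ncard_union_eq hdisj (hf.finite_setOf_lt_apply _) hfin]
  rfl

lemma oddSet_subset_Iic (hf : IsPartition f N) : OddSet f ⊆ Set.Iic (f 1) := fun v hv => by
  obtain ⟨j, hj, rfl⟩ := exists_apply_eq_of_one_le_mult (hv : Odd (mult f v)).pos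
  exact hf.mono le_rfl hj

lemma oddSet_finite (hf : IsPartition f N) : (OddSet f).Finite :=
  (Set.finite_Iic _).subset hf.oddSet_subset_Iic

lemma odd_of_mem_oddSet (hf : IsPartition f N) (horth : Orth f) {i : ℕ} (hi : i ∈ OddSet f) :
    Odd i := by
  by_contra hodd
  rw [Nat.not_odd_iff_even] at hodd
  have hi' : Odd (mult f i) := hi
  rcases Nat.eq_zero_or_pos i with rfl | hpos
  · simp [hf.mult_zero] at hi'
  · exact Nat.not_odd_iff_even.2 (horth i hodd hpos) hi'

lemma ncard_oddSet_inter_Ioi_eq_add_one (hf : IsPartition f N) {c a : ℕ} (hca : c < a)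
    (ha : a ∈ OddSet f) (hgap : OddSet f ∩ Set.Ioo c a = ∅) :
    (OddSet f ∩ Set.Ioi c).ncard = (OddSet f ∩ Set.Ioi a).ncard + 1 := by
  rw [inter_Ioi_eq_insert_of_inter_Ioo_eq_empty hca ha hgap,
    Set.ncard_insert_of_notMem (by simp) (hf.oddSet_finite.inter_of_left _)]

lemma odd_ncard_oddSet_inter_Ioi_iff (hf : IsPartition f N) (i : ℕ) :
    Odd (OddSet f ∩ Set.Ioi i).ncard ↔ Odd (partsAbove f i) := by
  induction hk : f 1 - i generalizing i with
  | zero =>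
    have hempty : OddSet f ∩ Set.Ioi i = ∅ := Set.eq_empty_of_forall_notMem
      fun v ⟨hv, hiv⟩ => by
        have := hf.oddSet_subset_Iic hv
        simp only [Set.mem_Iic, Set.mem_Ioi] at this hiv
        omega
    have hzero : partsAbove f i = 0 := by
      by_contra h
      have := (hf.lt_apply_iff_le_partsAbove le_rfl).2 (Nat.one_le_iff_ne_zero.2 h)
      omega
    simp [hempty, hzero]
  | succ k ih =>
    have hstep := ih (i + 1) (by omega)
    rw [hf.partsAbove_eq_partsAbove_succ_add_mult i]
    by_cases hodd : Odd (mult f (i + 1))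
    · have hgap : OddSet f ∩ Set.Ioo i (i + 1) = ∅ := by ext v; simp
      rw [hf.ncard_oddSet_inter_Ioi_eq_add_one (lt_add_one i) hodd hgap]
      simp only [Nat.odd_iff] at hstep hodd ⊢
      omega
    · have hskip : OddSet f ∩ Set.Ioi i = OddSet f ∩ Set.Ioi (i + 1) := by
        ext v
        simp only [Set.mem_inter_iff, Set.mem_Ioi]
        refine ⟨fun ⟨hv, hiv⟩ => ⟨hv, ?_⟩, fun ⟨hv, hiv⟩ => ⟨hv, by omega⟩⟩
        rcases (Nat.succ_le_of_lt hiv).eq_or_lt with rfl | h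
        · exact absurd hv hodd
        · exact h
      rw [Nat.not_odd_iff_even, Nat.even_iff] at hodd
      rw [hskip]
      simp only [Nat.odd_iff] at hstep ⊢
      omega

/-- Descent on `q = partsAbove f (f j)`: if `q` were even, speciality would make the part
`f q > f j` even as well, and then `partsAbove f (f q) = q - mult f (f q)` would be even too. -/
theorem odd_partsAbove_of_even (hf : IsPartition f N) (horth : Orth f)
    (hspec : SpecialOrthOdd f) {j : ℕ} (hj : 1 ≤ j) (heven : Even (f j)) :
    Odd (partsAbove f (f j)) := by
  induction hq : partsAbove f (f j) using Nat.strong_induction_on generalizing j with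
  | _ q ih =>
  by_contra hq_odd
  obtain ⟨t, ht⟩ := Nat.not_odd_iff_even.1 hq_odd
  have hnext : f (q + 1) = f j := hq ▸ hf.apply_partsAbove_add_one hj
  rcases Nat.eq_zero_or_pos q with rfl | hq_pos
  · exact Nat.not_even_iff_odd.2 hspec.1 (hnext ▸ heven)
  have hlast_even : Even (f q) := by
    have hpair := hspec.2 t (by omega)
    rw [show 2 * t = q by omega, hnext] at hpair
    rw [Nat.even_iff] at heven ⊢
    omega
  have hlt : f j < f q := (hf.lt_apply_iff_le_partsAbove hq_pos).2 hq.ge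
  have hbelow : partsAbove f (f q) < q :=
    not_le.1 fun h => lt_irrefl _ ((hf.lt_apply_iff_le_partsAbove hq_pos).2 h)
  have hodd := ih _ hbelow hq_pos hlast_even rfl
  have hrec := hf.partsAbove_eq_partsAbove_succ_add_mult (f q - 1)
  rw [hf.partsAbove_eq_of_lt_of_le hq_pos (by omega) (by omega), Nat.sub_add_cancel (by omega)]
    at hrec
  have hmult := horth (f q) hlast_even (by omega)
  rw [Nat.odd_iff] at hodd
  rw [Nat.even_iff] at hmult
  omega

theorem odd_ncard_oddSet_inter_Ioi (hf : IsPartition f N) (horth : Orth f)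
    (hspec : SpecialOrthOdd f) {j : ℕ} (hj : 1 ≤ j) (heven : Even (f j)) :
    Odd (OddSet f ∩ Set.Ioi (f j)).ncard :=
  (hf.odd_ncard_oddSet_inter_Ioi_iff _).2 (hf.odd_partsAbove_of_even horth hspec hj heven)

theorem odd_ncard_oddSet (hf : IsPartition f N) (horth : Orth f)
    (hspec : SpecialOrthOdd f) : Odd (OddSet f).ncard := by
  obtain ⟨j, hj, hzero⟩ := hf.exists_apply_eq_zero
  have h := hf.odd_ncard_oddSet_inter_Ioi horth hspec hj (hzero ▸ ⟨0, rfl⟩)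
  have hpos : OddSet f ⊆ Set.Ioi 0 := fun v hv =>
    Nat.pos_of_ne_zero (by rintro rfl; simp [OddSet, hf.mult_zero] at hv)
  rwa [hzero, Set.inter_eq_left.2 hpos] at h

end IsPartition

lemma PairedOO.le_of_le (hf : IsPartition f N) {a b a' b' : ℕ} (h : PairedOO f a b)
    (h' : PairedOO f a' b') (hle : b' ≤ a) : a' ≤ a := by
  obtain ⟨-, ha, -, hcnt, -⟩ := h
  obtain ⟨hlt', ha', -, hcnt', hgap'⟩ := h'
  by_contra! hlt
  rcases hle.lt_or_eq with hle | rfl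
  · exact hgap'.subset ⟨ha, hle, hlt⟩
  · rw [hf.ncard_oddSet_inter_Ioi_eq_add_one hlt' ha' hgap', Nat.odd_add_one] at hcnt
    exact hcnt hcnt'

lemma PairedOO.right_unique {a b b' : ℕ} (h : PairedOO f a b) (h' : PairedOO f a b') :
    b = b' := by
  obtain ⟨hba, -, hb, -, hgap⟩ := h
  obtain ⟨hb'a, -, hb', -, hgap'⟩ := h'
  rcases lt_trichotomy b b' with hlt | rfl | hlt
  · exact (hgap.subset ⟨hb', hlt, hb'a⟩).elim
  · rfl
  · exact (hgap'.subset ⟨hb, hlt, hba⟩).elim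

lemma PairedOO.lt_of_inter_Ioi_eq_empty {a b c : ℕ} (h : PairedOO f a b)
    (htop : OddSet f ∩ Set.Ioi c = ∅) : a < c := by
  obtain ⟨-, ha, -, hcnt, -⟩ := h
  refine (not_lt.1 fun hca => htop.subset ⟨ha, hca⟩).lt_of_ne ?_
  rintro rfl
  simp [htop] at hcnt

namespace IsIntervalOO

variable {Δ Δ' : Set ℕ}

theorem nonempty (hΔ : IsIntervalOO f Δ) : Δ.Nonempty := by
  rcases hΔ with ⟨b, hb, -, rfl⟩ | ⟨a, b, ⟨hba, ha, -, -, -⟩, rfl⟩ | ⟨k, -, -, -, rfl⟩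
  · exact ⟨b, (hb : Odd (mult f b)).pos, le_rfl⟩
  · exact ⟨a, (ha : Odd (mult f a)).pos, hba.le, le_rfl⟩
  · exact Set.singleton_nonempty k

theorem odd_of_mem (hf : IsPartition f N) (horth : Orth f) (hspec : SpecialOrthOdd f)
    (hΔ : IsIntervalOO f Δ) {i : ℕ} (hi : i ∈ Δ) : Odd i := by
  rcases hΔ with ⟨b, -, htop, rfl⟩ | ⟨a, b, ⟨-, ha, hb, hcnt, hgap⟩, rfl⟩ | ⟨k, hk, -, -, rfl⟩
  · obtain ⟨hm, hbi⟩ := hi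
    by_contra hodd
    obtain ⟨j, hj, rfl⟩ := exists_apply_eq_of_one_le_mult hm
    have h := hf.odd_ncard_oddSet_inter_Ioi horth hspec hj (Nat.not_odd_iff_even.1 hodd)
    have hempty : OddSet f ∩ Set.Ioi (f j) = ∅ := Set.subset_empty_iff.1
      ((Set.inter_subset_inter_right _ (Set.Ioi_subset_Ioi hbi)).trans htop.subset)
    simp [hempty] at h
  · obtain ⟨hm, hbi, hia⟩ := hi
    by_contra hodd
    have hbi' : b < i := hbi.lt_of_ne fun h => hodd (h ▸ hf.odd_of_mem_oddSet horth hb)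
    have hia' : i < a := hia.lt_of_ne fun h => hodd (h ▸ hf.odd_of_mem_oddSet horth ha)
    have hgap' : OddSet f ∩ Set.Ioo i a = ∅ := Set.subset_empty_iff.1
      ((Set.inter_subset_inter_right _ (Set.Ioo_subset_Ioo_left hbi'.le)).trans hgap.subset)
    obtain ⟨j, hj, rfl⟩ := exists_apply_eq_of_one_le_mult hm
    have h := hf.odd_ncard_oddSet_inter_Ioi horth hspec hj (Nat.not_odd_iff_even.1 hodd)
    rw [hf.ncard_oddSet_inter_Ioi_eq_add_one hia' ha hgap', Nat.odd_add_one] at h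
    exact h hcnt
  · exact (Set.mem_singleton_iff.1 hi) ▸ hk

theorem eq_of_mem (hf : IsPartition f N) (hΔ : IsIntervalOO f Δ) (hΔ' : IsIntervalOO f Δ')
    {i : ℕ} (hi : i ∈ Δ) (hi' : i ∈ Δ') : Δ = Δ' := by
  rcases hΔ with ⟨b, hb, htop, rfl⟩ | ⟨a, b, hab, rfl⟩ | ⟨k, -, -, hk, rfl⟩ <;>
    rcases hΔ' with ⟨b', hb', htop', rfl⟩ | ⟨a', b', hab', rfl⟩ | ⟨k', -, -, hk', rfl⟩
  · rw [le_antisymm (not_lt.1 fun h : b' < b => htop'.subset ⟨hb, h⟩)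
      (not_lt.1 fun h : b < b' => htop.subset ⟨hb', h⟩)]
  · exact ((hab'.lt_of_inter_Ioi_eq_empty htop).not_ge (hi.2.trans hi'.2.2)).elim
  · exact (hk' (Or.inl ⟨b, hb, htop, hi' ▸ hi.2⟩)).elim
  · exact ((hab.lt_of_inter_Ioi_eq_empty htop').not_ge (hi'.2.trans hi.2.2)).elim
  · obtain rfl := le_antisymm (hab'.le_of_le hf hab (hi.2.1.trans hi'.2.2))
      (hab.le_of_le hf hab' (hi'.2.1.trans hi.2.2))
    rw [hab.right_unique hab']
  · exact (hk' (Or.inr ⟨a, b, hab, hi' ▸ hi.2.1, hi' ▸ hi.2.2⟩)).elim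
  · exact (hk (Or.inl ⟨b', hb', htop', hi ▸ hi'.2⟩)).elim
  · exact (hk (Or.inr ⟨a', b', hab', hi ▸ hi'.2.1, hi ▸ hi'.2.2⟩)).elim
  · rw [← Set.mem_singleton_iff.1 hi, ← Set.mem_singleton_iff.1 hi']

end IsIntervalOO

theorem sUnion_setOf_isIntervalOO (hf : IsPartition f N) (horth : Orth f)
    (hspec : SpecialOrthOdd f) : ⋃₀ {Δ | IsIntervalOO f Δ} = JordbpO f := by
  ext i
  constructor
  · rintro ⟨Δ, hΔ, hi⟩
    refine ⟨hΔ.odd_of_mem hf horth hspec hi, ?_⟩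
    rcases hΔ with ⟨b, -, -, rfl⟩ | ⟨a, b, -, rfl⟩ | ⟨k, -, hk, -, rfl⟩
    · exact hi.1
    · exact hi.1
    · exact (Set.mem_singleton_iff.1 hi) ▸ hk
  · rintro ⟨hodd, hm⟩
    by_cases htop : ∃ b, b ∈ OddSet f ∧ OddSet f ∩ Set.Ioi b = ∅ ∧ b ≤ i
    · obtain ⟨b, hb, htop, hbi⟩ := htop
      exact ⟨_, Or.inl ⟨b, hb, htop, rfl⟩, hm, hbi⟩
    by_cases hpair : ∃ a b, PairedOO f a b ∧ b ≤ i ∧ i ≤ a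
    · obtain ⟨a, b, hab, hbi, hia⟩ := hpair
      exact ⟨_, Or.inr (Or.inl ⟨a, b, hab, rfl⟩), hm, hbi, hia⟩
    · exact ⟨{i}, Or.inr (Or.inr ⟨i, hodd, hm, fun h => h.elim htop hpair, rfl⟩), rfl⟩

/-- Section 1.4: for a special orthogonal partition of `2n+1`, the number `m` of
terms with odd multiplicity is odd (and those terms are odd), the intervals
consist of odd integers and form a partition of `Jord_bp(λ)`. -/
theorem stmt12 (n : ℕ) (f : ℕ → ℕ)
    (hpart : IsPartition f (2*n+1)) (horth : Orth f) (hspec : SpecialOrthOdd f) :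
    (Odd (OddSet f).ncard ∧ ∀ i ∈ OddSet f, Odd i) ∧
    (∀ Δ, IsIntervalOO f Δ → ∀ i ∈ Δ, Odd i) ∧
    (∀ Δ, IsIntervalOO f Δ → Δ.Nonempty) ∧
    (∀ Δ Δ', IsIntervalOO f Δ → IsIntervalOO f Δ' → Δ ≠ Δ' → Disjoint Δ Δ') ∧
    ⋃₀ {Δ | IsIntervalOO f Δ} = JordbpO f :=
  ⟨⟨hpart.odd_ncard_oddSet horth hspec, fun _ => hpart.odd_of_mem_oddSet horth⟩,
    fun _ hΔ _ => hΔ.odd_of_mem hpart horth hspec,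
    fun _ hΔ => hΔ.nonempty,
    fun _ _ hΔ hΔ' hne => Set.disjoint_left.2 fun _ hi hi' => hne (hΔ.eq_of_mem hpart hΔ' hi hi'),
    sUnion_setOf_isIntervalOO hpart horth hspec⟩

end Wald
end

section
/- For every integer N ≥ 1 and every partition Λ of N, the set of orthogonal partitions of N that are ≤ Λ in the dominance order is nonempty and possesses a greatest element. -/
open Classical

namespace Wald

/-! The greatest element is reached by repeated orthogonal collapse. If `μ` is not orthogonal, let
`q` be its largest even part of odd multiplicity, `j` the last row of length `q` and `l` the first
row below it of length at most `q - 2`. Moving one box from row `j` to row `l` lowers `S k` by one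
exactly for `j ≤ k < l`, and keeps every orthogonal `ν ≤ μ` below the result: if `S ν k = S μ k`
for such a `k`, then both `ν` and `μ` have all rows `≥ q - 1` up to `k` and `< q` after it, and in
that situation `S k + k` has the parity of `∑_{v ≥ q} mult v * (v + 1)`, i.e. of the number of even
parts `≥ q` of odd multiplicity, which is `0` for `ν` and `1` for `μ`. Each collapse strictly
decreases `∑_{k ≤ N} S μ k`, so the process ends at an orthogonal partition. -/

open Finset

lemma S_succ (f : ℕ → ℕ) (k : ℕ) : S f (k + 1) = S f k + f (k + 1) :=
  sum_Icc_succ_top (Nat.le_add_left 1 k) f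

lemma S_mono (f : ℕ → ℕ) {k m : ℕ} (h : k ≤ m) : S f k ≤ S f m :=
  sum_le_sum_of_subset (Icc_subset_Icc_right h)

lemma mono_of_succ_le {f : ℕ → ℕ} (h : ∀ t, 1 ≤ t → f (t + 1) ≤ f t) :
    ∀ ⦃j k : ℕ⦄, 1 ≤ j → j ≤ k → f k ≤ f j := by
  intro j k hj hjk
  induction k, hjk using Nat.le_induction with
  | base => exact le_rfl
  | succ n hjn ih => exact (h n (hj.trans hjn)).trans ih

namespace IsPartition

variable {f : ℕ → ℕ} {N : ℕ}

lemma antitoneOn (hf : IsPartition f N) : AntitoneOn f (Set.Ici 1) :=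
  fun _ ha _ _ hab => hf.mono ha hab

lemma S_le (hf : IsPartition f N) (k : ℕ) : S f k ≤ N := by
  obtain ⟨m, hm⟩ := hf.fin
  calc S f k ≤ S f (max k m) := S_mono f (le_max_left k m)
    _ = N := hf.total _ fun t ht => hm t (lt_of_le_of_lt (le_max_right k m) ht)

lemma le_of_pos (hf : IsPartition f N) {t : ℕ} (hpos : 1 ≤ f t) : t ≤ N :=
  calc t = ∑ _s ∈ Icc 1 t, 1 := by simp
    _ ≤ S f t := sum_le_sum fun s hs => hpos.trans (hf.mono (mem_Icc.1 hs).1 (mem_Icc.1 hs).2)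
    _ ≤ N := hf.S_le t

end IsPartition

section MoveBox

def moveBox (f : ℕ → ℕ) (j l : ℕ) : ℕ → ℕ :=
  fun t => if t = j then f t - 1 else if t = l then f t + 1 else f t

variable {f : ℕ → ℕ} {j l : ℕ}

lemma moveBox_of_ne {t : ℕ} (hj : t ≠ j) (hl : t ≠ l) : moveBox f j l t = f t := by
  simp [moveBox, hj, hl]

lemma S_moveBox (hj : 1 ≤ j) (hjl : j < l) (hfj : 1 ≤ f j) (k : ℕ) :
    S (moveBox f j l) k + (if j ≤ k ∧ k < l then 1 else 0) = S f k := by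
  induction k with
  | zero => simp [S]; omega
  | succ k ih =>
    rw [S_succ, S_succ, ← ih]
    simp only [moveBox]
    split_ifs at * <;> subst_vars <;> omega

lemma dom_moveBox (hj : 1 ≤ j) (hjl : j < l) (hfj : 1 ≤ f j) : Dom (moveBox f j l) f :=
  fun k => by
    have := S_moveBox hj hjl hfj k
    omega

lemma isPartition_moveBox {N : ℕ} (hf : IsPartition f N) (hj : 1 ≤ j) (hjl : j < l)
    (hj_succ : f (j + 1) < f j) (hl_pred : f l < f (l - 1)) (hgap : f l + 2 ≤ f j) :
    IsPartition (moveBox f j l) N where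
  mono := mono_of_succ_le fun t ht => by
    have := hf.mono ht (Nat.le_add_right t 1)
    simp only [moveBox]
    split_ifs <;> subst_vars <;> (try simp only [Nat.add_sub_cancel] at *) <;> omega
  fin := by
    obtain ⟨m, hm⟩ := hf.fin
    exact ⟨max m l, fun t ht => by rw [moveBox_of_ne (by omega) (by omega), hm t (by omega)]⟩
  total m hm := by
    have hlm : l ≤ m := by
      by_contra hlt
      have := hm l (by omega)
      simp only [moveBox, hjl.ne', if_false, if_true] at this
      omega
    have hS := S_moveBox (f := f) hj hjl (by omega) m
    rw [if_neg (by omega), add_zero] at hS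
    rw [hS]
    exact hf.total m fun t ht => by
      have := hm t ht
      rwa [moveBox_of_ne (by omega) (by omega)] at this

end MoveBox

section Parity

variable {ν : ℕ → ℕ} {k q : ℕ}

lemma S_add_card_mul_eq (hq : 1 ≤ q) (hlow : ∀ t ∈ Icc 1 k, q - 1 ≤ ν t) :
    S ν k + #{t ∈ Icc 1 k | q ≤ ν t} * q =
      ∑ t ∈ Icc 1 k with q ≤ ν t, (ν t + 1) + k * (q - 1) := by
  have hrest : ∑ t ∈ Icc 1 k with ¬ q ≤ ν t, ν t = #{t ∈ Icc 1 k | ¬ q ≤ ν t} * (q - 1) := by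
    rw [sum_const_nat]
    intro t ht
    have := hlow t (mem_filter.1 ht).1
    have := (mem_filter.1 ht).2
    omega
  have hcard := card_filter_add_card_filter_not (s := Icc 1 k) (fun t => q ≤ ν t)
  rw [Nat.card_Icc, Nat.add_sub_cancel] at hcard
  rw [S, ← sum_filter_add_sum_filter_not (Icc 1 k) (fun t => q ≤ ν t), hrest, sum_add_distrib,
    sum_const, smul_eq_mul, mul_one]
  obtain ⟨p, rfl⟩ : ∃ p, q = p + 1 := ⟨q - 1, by omega⟩
  rw [Nat.add_sub_cancel]
  nlinarith [hcard]

lemma sum_filter_le_eq_sum_mult (hν : AntitoneOn ν (Set.Ici 1)) (hhigh : ν (k + 1) < q)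
    (g : ℕ → ℕ) :
    ∑ t ∈ Icc 1 k with q ≤ ν t, g (ν t) =
      ∑ v ∈ {t ∈ Icc 1 k | q ≤ ν t}.image ν, mult ν v * g v := by
  rw [sum_comp]
  refine sum_congr rfl fun v hv => ?_
  obtain ⟨t, ht, rfl⟩ := mem_image.1 hv
  have hq : q ≤ ν t := (mem_filter.1 ht).2
  rw [smul_eq_mul, mult, ← Set.ncard_coe_finset]
  congr 2
  ext s
  simp only [coe_filter, mem_filter, mem_Icc, Set.mem_ofPred_eq]
  constructor
  · rintro ⟨⟨⟨hs1, -⟩, -⟩, hs⟩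
    exact ⟨hs1, hs⟩
  · rintro ⟨hs1, hs⟩
    refine ⟨⟨⟨hs1, ?_⟩, hs ▸ hq⟩, hs⟩
    by_contra! hks
    have := hν (Set.mem_Ici.2 (Nat.le_add_left 1 k)) (Set.mem_Ici.2 hs1) hks
    omega

lemma even_S_add_iff (hν : AntitoneOn ν (Set.Ici 1)) (hq : Even q) (hq1 : 1 ≤ q)
    (hlow : q - 1 ≤ ν k) (hhigh : ν (k + 1) < q) :
    Even (S ν k + k) ↔ Even (∑ v ∈ {t ∈ Icc 1 k | q ≤ ν t}.image ν, mult ν v * (v + 1)) := by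
  have hlow' : ∀ t ∈ Icc 1 k, q - 1 ≤ ν t := fun t ht =>
    hlow.trans (hν (Set.mem_Ici.2 (mem_Icc.1 ht).1)
      (Set.mem_Ici.2 ((mem_Icc.1 ht).1.trans (mem_Icc.1 ht).2)) (mem_Icc.1 ht).2)
  have key := S_add_card_mul_eq hq1 hlow'
  rw [sum_filter_le_eq_sum_mult hν hhigh (· + 1)] at key
  have hq' : Odd (q - 1) := Nat.Even.sub_odd hq1 hq odd_one
  have := congrArg Even key
  simp only [Nat.even_add, Nat.even_mul, hq, or_true, iff_true, Nat.not_even_iff_odd.2 hq',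
    or_false] at this
  rw [Nat.even_add, this]
  tauto

lemma even_mult_mul_succ {v : ℕ} (h : Odd v ∨ Even (mult ν v)) : Even (mult ν v * (v + 1)) := by
  rcases h with hv | hm
  · exact hv.add_one.mul_left _
  · exact hm.mul_right _

lemma Orth.even_S_add (hνo : Orth ν) (hν : AntitoneOn ν (Set.Ici 1)) (hq : Even q)
    (hq1 : 1 ≤ q) (hlow : q - 1 ≤ ν k) (hhigh : ν (k + 1) < q) : Even (S ν k + k) := by
  rw [even_S_add_iff hν hq hq1 hlow hhigh]
  refine even_sum _ fun v hv => even_mult_mul_succ ?_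
  obtain ⟨t, ht, rfl⟩ := mem_image.1 hv
  rcases Nat.even_or_odd (ν t) with he | ho
  · exact .inr (hνo _ he (hq1.trans (mem_filter.1 ht).2))
  · exact .inl ho

lemma odd_S_add (hν : AntitoneOn ν (Set.Ici 1)) (hq : Even q) (hq1 : 1 ≤ q)
    (hodd : Odd (mult ν q)) (habove : ∀ v, q < v → Even v → Even (mult ν v))
    (hlow : q - 1 ≤ ν k) (hhigh : ν (k + 1) < q) : Odd (S ν k + k) := by
  rw [← Nat.not_even_iff_odd, even_S_add_iff hν hq hq1 hlow hhigh, Nat.not_even_iff_odd]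
  obtain ⟨s, hs1, hsq⟩ := Set.nonempty_of_ncard_ne_zero hodd.pos.ne'
  have hsk : s ≤ k := by
    by_contra! hks
    have := hν (Set.mem_Ici.2 (Nat.le_add_left 1 k)) (Set.mem_Ici.2 hs1) hks
    omega
  have hqV : q ∈ {t ∈ Icc 1 k | q ≤ ν t}.image ν :=
    mem_image.2 ⟨s, mem_filter.2 ⟨mem_Icc.2 ⟨hs1, hsk⟩, hsq.ge⟩, hsq⟩
  rw [← add_sum_erase _ _ hqV]
  refine (hodd.mul hq.add_one).add_even (even_sum _ fun v hv => even_mult_mul_succ ?_)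
  obtain ⟨hvq, hv⟩ := mem_erase.1 hv
  obtain ⟨t, ht, rfl⟩ := mem_image.1 hv
  rcases Nat.even_or_odd (ν t) with he | ho
  · exact .inr (habove _ (lt_of_le_of_ne (mem_filter.1 ht).2 hvq.symm) he)
  · exact .inl ho

end Parity

lemma exists_max_even_odd_mult {f : ℕ → ℕ} (hf : AntitoneOn f (Set.Ici 1)) (ho : ¬ Orth f) :
    ∃ q, Even q ∧ 1 ≤ q ∧ Odd (mult f q) ∧ ∀ v, q < v → Even v → Even (mult f v) := by
  set bad := {v | Even v ∧ 1 ≤ v ∧ Odd (mult f v)}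
  have hfin : bad.Finite := (Set.finite_Iic (f 1)).subset fun v hv => by
    obtain ⟨t, ht1, rfl⟩ := Set.nonempty_of_ncard_ne_zero hv.2.2.pos.ne'
    exact hf (Set.mem_Ici.2 le_rfl) (Set.mem_Ici.2 ht1) ht1
  have hne : bad.Nonempty := by
    simp only [Orth, not_forall, Nat.not_even_iff_odd] at ho
    obtain ⟨i, hi, hi1, hodd⟩ := ho
    exact ⟨i, hi, hi1, hodd⟩
  obtain ⟨q, ⟨hq, hq1, hodd⟩, hmax⟩ := Set.exists_max_image bad id hfin hne
  refine ⟨q, hq, hq1, hodd, fun v hqv hv => ?_⟩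
  by_contra hbad
  have := hmax v ⟨hv, by omega, Nat.not_even_iff_odd.1 hbad⟩
  exact absurd this (not_le.2 hqv)

lemma IsPartition.exists_collapse_rows {f : ℕ → ℕ} {N q : ℕ} (hf : IsPartition f N) (hq : 2 ≤ q)
    (hmult : mult f q ≠ 0) :
    ∃ j l, 1 ≤ j ∧ j < l ∧ f j = q ∧ f (j + 1) < q ∧ f l + 2 ≤ q ∧
      ∀ t, j ≤ t → t < l → q ≤ f t + 1 := by
  obtain ⟨m, hm⟩ := hf.fin
  obtain ⟨s, hs1, hsq⟩ := Set.nonempty_of_ncard_ne_zero hmult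
  have hend : ∃ t, f (t + 1) < q := ⟨m, by rw [hm _ (by omega)]; omega⟩
  have hj_succ : f (Nat.find hend + 1) < q := Nat.find_spec hend
  have hj_min : ∀ t < Nat.find hend, q ≤ f (t + 1) := fun t ht => not_lt.1 (Nat.find_min hend ht)
  generalize Nat.find hend = j at hj_succ hj_min
  have hsj : s ≤ j := by
    by_contra! hjs
    have := hf.mono (Nat.le_add_left 1 j) hjs
    omega
  have hj1 : 1 ≤ j := hs1.trans hsj
  have hjq : f j = q := by
    have := hj_min (j - 1) (by omega)
    rw [Nat.sub_add_cancel hj1] at this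
    have := hf.mono hs1 hsj
    omega
  have hgap : ∃ t, j < t ∧ f t + 2 ≤ q := ⟨max j m + 1, by omega, by rw [hm _ (by omega)]; omega⟩
  have hl : j < Nat.find hgap ∧ f (Nat.find hgap) + 2 ≤ q := Nat.find_spec hgap
  have hl_min : ∀ t < Nat.find hgap, ¬ (j < t ∧ f t + 2 ≤ q) := fun t ht => Nat.find_min hgap ht
  generalize Nat.find hgap = l at hl hl_min
  refine ⟨j, l, hj1, hl.1, hjq, hj_succ, hl.2, fun t hjt htl => ?_⟩
  rcases hjt.eq_or_lt with rfl | hjt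
  · omega
  · have := hl_min t htl
    omega

lemma S_lt_of_orth {μ ν : ℕ → ℕ} {k q : ℕ} (hμ : AntitoneOn μ (Set.Ici 1))
    (hq : Even q) (hq1 : 1 ≤ q) (hodd : Odd (mult μ q))
    (habove : ∀ v, q < v → Even v → Even (mult μ v)) (hν : AntitoneOn ν (Set.Ici 1))
    (hνo : Orth ν) (hνμ : Dom ν μ) (hk : 1 ≤ k) (hlow : q - 1 ≤ μ k) (hhigh : μ (k + 1) < q) :
    S ν k < S μ k := by
  refine (hνμ k).lt_of_ne fun heq => ?_
  have hνk : μ k ≤ ν k := by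
    obtain ⟨k, rfl⟩ : ∃ k', k = k' + 1 := ⟨k - 1, by omega⟩
    have := hνμ k
    rw [S_succ, S_succ] at heq
    omega
  have hνk1 : ν (k + 1) ≤ μ (k + 1) := by
    have := hνμ (k + 1)
    rw [S_succ, S_succ] at this
    omega
  have hμpar := odd_S_add hμ hq hq1 hodd habove hlow hhigh
  have hνpar := hνo.even_S_add hν hq hq1 (hlow.trans hνk) (hνk1.trans_lt hhigh)
  rw [heq] at hνpar
  exact Nat.not_even_iff_odd.2 hμpar hνpar

lemma IsPartition.exists_orth_collapse_step {μ : ℕ → ℕ} {N : ℕ} (hμ : IsPartition μ N)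
    (hμo : ¬ Orth μ) :
    ∃ μ', IsPartition μ' N ∧ Dom μ' μ ∧ (∃ k ∈ Icc 1 N, S μ' k < S μ k) ∧
      ∀ ν, IsPartition ν N → Orth ν → Dom ν μ → Dom ν μ' := by
  obtain ⟨q, hq, hq1, hodd, habove⟩ := exists_max_even_odd_mult hμ.antitoneOn hμo
  obtain ⟨j, l, hj1, hjl, hjq, hj_succ, hl, hrows⟩ :=
    hμ.exists_collapse_rows (by obtain ⟨r, rfl⟩ := hq; omega) hodd.pos.ne'
  have hl_pred : μ l < μ (l - 1) := by
    have := hrows (l - 1) (by omega) (by omega)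
    omega
  have hS := S_moveBox (f := μ) hj1 hjl (by omega)
  refine ⟨moveBox μ j l, isPartition_moveBox hμ hj1 hjl (by omega) hl_pred (by omega),
    dom_moveBox (f := μ) hj1 hjl (by omega), ⟨j, mem_Icc.2 ⟨hj1, hμ.le_of_pos (by omega)⟩, ?_⟩, ?_⟩
  · have := hS j
    rw [if_pos ⟨le_rfl, hjl⟩] at this
    omega
  · intro ν hν hνo hνμ k
    have := hS k
    split_ifs at this with hk
    · have := S_lt_of_orth hμ.antitoneOn hq hq1 hodd habove hν.antitoneOn hνo hνμ
        (hj1.trans hk.1) (by have := hrows k hk.1 hk.2; omega)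
        ((hμ.mono (by omega) (by omega : j + 1 ≤ k + 1)).trans_lt hj_succ)
      omega
    · exact (hνμ k).trans_eq (by omega)

theorem exists_isDualOf {N : ℕ} {μ : ℕ → ℕ} (hμ : IsPartition μ N) : ∃ g, IsDualOf g N μ := by
  induction h : ∑ k ∈ Icc 1 N, S μ k using Nat.strong_induction_on generalizing μ with
  | _ n ih =>
  by_cases hμo : Orth μ
  · exact ⟨μ, ⟨hμ, hμo, fun _ => le_rfl⟩, fun _ _ _ h => h⟩
  obtain ⟨μ', hμ', hdom, ⟨k, hk, hlt⟩, hmax⟩ := hμ.exists_orth_collapse_step hμo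
  obtain ⟨g, ⟨hg, hgo, hgμ'⟩, hgmax⟩ :=
    ih _ (h ▸ sum_lt_sum (fun i _ => hdom i) ⟨k, hk, hlt⟩) hμ' rfl
  exact ⟨g, ⟨hg, hgo, fun i => (hgμ' i).trans (hdom i)⟩,
    fun ν hν hνo hνμ => hgmax ν hν hνo (hmax ν hν hνo hνμ)⟩

theorem stmt13_general (N : ℕ) (Λ : ℕ → ℕ) (hΛ : IsPartition Λ N) :
    (∃ f, IsPartition f N ∧ Orth f ∧ Dom f Λ) ∧
    ∃ g, (IsPartition g N ∧ Orth g ∧ Dom g Λ) ∧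
      ∀ f, IsPartition f N → Orth f → Dom f Λ → Dom f g := by
  obtain ⟨g, hg, hgmax⟩ := exists_isDualOf hΛ
  exact ⟨⟨g, hg⟩, g, hg, hgmax⟩

/-- The set of orthogonal partitions of `N` dominated by a given partition `Λ`
is nonempty and has a greatest element. -/
theorem stmt13 (N : ℕ) (hN : 1 ≤ N) (Λ : ℕ → ℕ) (hΛ : IsPartition Λ N) :
    (∃ f, IsPartition f N ∧ Orth f ∧ Dom f Λ) ∧
    ∃ g, (IsPartition g N ∧ Orth g ∧ Dom g Λ) ∧
      ∀ f, IsPartition f N → Orth f → Dom f Λ → Dom f g :=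
  stmt13_general N Λ hΛ

end Wald
end
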